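/- arXiv:1602.04244 — 4 statements merged into one kernel-verified Lean document; each statement's English description precedes it below -/
import Mathlib

section
/- The coefficient t = (-1)^{B-1}((B-1)!/(b_2!⋯b_{n-1}!))(n+1) is an integer for all nonnegative integers b_2,…,b_{n-1} with 2b_2 + ⋯ + (n-1)b_{n-1} = n+1 and B = ∑ b_j ≥ 1. -/
/-- For nonnegative integers `b_2,…,b_{n-1}` with
`2 b_2 + ⋯ + (n-1) b_{n-1} = n + 1` and `B = ∑ b_j ≥ 1`, the quantity
`(-1)^{B-1} ((B-1)!/(b_2!⋯b_{n-1}!)) (n+1)` is an integer. -/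
theorem stmt8 (n : ℕ) (b : ℕ → ℕ)
    (hw : ∑ j ∈ Finset.Icc 2 (n - 1), j * b j = n + 1)
    (hB : 1 ≤ ∑ j ∈ Finset.Icc 2 (n - 1), b j) :
    ∃ m : ℤ,
      (-1 : ℝ) ^ ((∑ j ∈ Finset.Icc 2 (n - 1), b j) - 1) *
          ((∑ j ∈ Finset.Icc 2 (n - 1), b j) - 1).factorial /
          (∏ j ∈ Finset.Icc 2 (n - 1), (b j).factorial : ℕ) * (n + 1) = m := by
  set s := Finset.Icc 2 (n - 1) with hs
  set B := ∑ j ∈ s, b j with hBdef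
  have hdvd : (∏ j ∈ s, (b j).factorial) ∣ (n + 1) * (B - 1).factorial := by
    rw [← hw, Finset.sum_mul]
    apply Finset.dvd_sum
    intro j hj
    rcases Nat.eq_zero_or_pos (b j) with h0 | hpos
    · simp [h0]
    · have key : (∏ i ∈ s, (b i).factorial) ∣ b j * (B - 1).factorial := by
        set b' := Function.update b j (b j - 1) with hb'
        have herase : ∑ i ∈ s.erase j, b' i = ∑ i ∈ s.erase j, b i :=
          Finset.sum_congr rfl fun i hi => by
            simp [hb', Function.update_of_ne (Finset.ne_of_mem_erase hi)]
        have hBsplit : ∑ i ∈ s.erase j, b i + b j = B := by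
          rw [hBdef, Finset.sum_erase_add s b hj]
        have hsum' : ∑ i ∈ s, b' i = B - 1 := by
          rw [← Finset.sum_erase_add s b' hj, herase]
          simp only [hb', Function.update_self]
          omega
        have hprod : ∏ i ∈ s, (b i).factorial
            = b j * ∏ i ∈ s, (b' i).factorial := by
          rw [← Finset.prod_erase_mul s _ hj, ← Finset.prod_erase_mul s _ hj]
          have : ∏ i ∈ s.erase j, (b' i).factorial
              = ∏ i ∈ s.erase j, (b i).factorial :=
            Finset.prod_congr rfl fun i hi => by
              simp [hb', Function.update_of_ne (Finset.ne_of_mem_erase hi)]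
          rw [this]
          have : (b j).factorial = b j * (b' j).factorial := by
            simp only [hb', Function.update_self]
            rw [← Nat.succ_pred_eq_of_pos hpos]
            simp [Nat.factorial_succ, Nat.succ_pred_eq_of_pos hpos]
          rw [this]; ring
        have hfac : (B - 1).factorial
            = (∏ i ∈ s, (b' i).factorial) * Nat.multinomial s b' := by
          rw [← hsum', ← Nat.multinomial_spec]
        refine ⟨Nat.multinomial s b', ?_⟩
        rw [hfac, hprod]; ring
      calc (∏ i ∈ s, (b i).factorial) ∣ b j * (B - 1).factorial := key
        _ ∣ j * b j * (B - 1).factorial := ⟨j, by ring⟩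
  obtain ⟨k, hk⟩ := hdvd
  refine ⟨(-1) ^ (B - 1) * k, ?_⟩
  have hP : (0 : ℝ) < (∏ j ∈ s, (b j).factorial : ℕ) := by
    exact_mod_cast Finset.prod_pos fun i _ => Nat.factorial_pos _
  have hcast : ((n : ℝ) + 1) * ((B - 1).factorial : ℕ)
      = ((∏ j ∈ s, (b j).factorial : ℕ) : ℝ) * k := by
    exact_mod_cast hk
  push_cast
  field_simp
  push_cast at hcast
  linear_combination hcast
end

section
/- For n ≥ 4, M_n(v_2,…,v_{n-2}) = ∑ (-1)^{B-1} ((B-1)!/(b_2!⋯b_{n-2}!)) v_2^{b_2} ⋯ v_{n-2}^{b_{n-2}}, where the sum is over nonnegative integers b_2,…,b_{n-2} with 2b_2 + ⋯ + (n-2)b_{n-2} = n and B = b_2 + ⋯ + b_{n-2}, and where M_n is defined by the recursion M_2 = M_3 = 0, M_n = -(1/n) ∑_{j=2}^{n-2} j v_{n-j}(v_j + M_j). -/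
/-!
Write `V = ∑_{k ≥ 2} v_k X^k`. Expanding `log (1 + V) = ∑_B (-1)^(B-1) V^B / B` by the
multinomial theorem, its `X^n` coefficient `L_n` is `v_n` plus the sum in the statement: a
partition of `n` into parts `≥ 2`, with `b_j` parts equal to `j`, contributes
`(-1)^(B-1) (B-1)! / ∏ b_j! * ∏ v_j^b_j`.
The recursion for `M` says that `v + M` satisfies the coefficient form of `(1 + V) X L' = X V'`,
which determines it. That `L` satisfies it is checked on coefficients, without power series:
deleting one part `k` from a partition turns its term in `L` into `v_k` times a term of
`G = (1 + V)⁻¹`, which yields both `(1 + V) G = 1` and `X L' = X V' G`.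
-/

namespace LogSeries

open Finset Nat

section Multiset

variable {α K : Type*} [DecidableEq α] [Field K]

def countFactorialProd (s : Multiset α) : ℕ := ∏ a ∈ s.toFinset, (s.count a)!

lemma countFactorialProd_pos (s : Multiset α) : 0 < countFactorialProd s :=
  prod_pos fun _ _ => factorial_pos _

lemma countFactorialProd_cons (a : α) (s : Multiset α) :
    countFactorialProd (a ::ₘ s) = (s.count a + 1) * countFactorialProd s := by
  have hs : countFactorialProd s = ∏ b ∈ insert a s.toFinset, (s.count b)! :=
    prod_subset (subset_insert _ _) fun b _ hb => by
      rw [Multiset.count_eq_zero.2 (by simpa using hb), factorial_zero]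
  rw [hs, countFactorialProd, Multiset.toFinset_cons, ← mul_prod_erase _ _ (mem_insert_self a _),
    ← mul_prod_erase _ (fun b => (s.count b)!) (mem_insert_self a _), Multiset.count_cons_self,
    factorial_succ, mul_assoc]
  congr 2
  exact prod_congr rfl fun b hb => by rw [Multiset.count_cons_of_ne (ne_of_mem_erase hb)]

/-- The term of the partition with multiset of parts `s` in the coefficients of `log (1 + V)`. -/
def logTerm (v : α → K) (s : Multiset α) : K :=
  (-1) ^ (s.card - 1) * (s.card - 1)! / countFactorialProd s * (s.map v).prod

/-- The term of the partition with multiset of parts `s` in the coefficients of `(1 + V)⁻¹`. -/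
def invTerm (v : α → K) (s : Multiset α) : K :=
  (-1) ^ s.card * s.card ! / countFactorialProd s * (s.map v).prod

variable (v : α → K)

lemma count_add_one_mul_logTerm_cons [CharZero K] (a : α) (s : Multiset α) :
    ((s.count a : K) + 1) * logTerm v (a ::ₘ s) = v a * invTerm v s := by
  have : (countFactorialProd s : K) ≠ 0 := by exact_mod_cast (countFactorialProd_pos s).ne'
  simp only [logTerm, invTerm, countFactorialProd_cons, Multiset.card_cons, add_tsub_cancel_right,
    Multiset.map_cons, Multiset.prod_cons]
  push_cast
  field_simp

lemma card_mul_logTerm {s : Multiset α} (hs : s ≠ 0) :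
    (s.card : K) * logTerm v s = -invTerm v s := by
  obtain ⟨B, hB⟩ := exists_eq_succ_of_ne_zero (Multiset.card_pos.2 hs).ne'
  simp only [logTerm, invTerm, hB, succ_sub_one, factorial_succ, pow_succ]
  push_cast
  ring

@[simp] lemma invTerm_zero : invTerm v 0 = 1 := by simp [invTerm, countFactorialProd]

lemma logTerm_singleton (a : α) : logTerm v {a} = v a := by
  simp [logTerm, countFactorialProd]

end Multiset

section Counts

variable {N : ℕ}

def ofCounts (b : Fin N → ℕ) : Multiset ℕ := ∑ j, Multiset.replicate (b j) (j : ℕ)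

lemma count_ofCounts (b : Fin N → ℕ) (k : ℕ) :
    (ofCounts b).count k = if h : k < N then b ⟨k, h⟩ else 0 := by
  simp only [ofCounts, Multiset.count_sum', Multiset.count_replicate]
  split_ifs with h
  · rw [sum_eq_single ⟨k, h⟩ (fun j _ hj => if_neg fun hjk => hj (Fin.ext hjk)) (by simp),
      if_pos rfl]
  · exact sum_eq_zero fun j _ => if_neg (by omega)

@[simp] lemma count_ofCounts_fin (b : Fin N → ℕ) (j : Fin N) :
    (ofCounts b).count (j : ℕ) = b j := by
  simp [count_ofCounts]

lemma lt_of_mem_ofCounts {b : Fin N → ℕ} {x : ℕ} (hx : x ∈ ofCounts b) : x < N := by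
  by_contra h
  rw [← Multiset.count_ne_zero, count_ofCounts, dif_neg h] at hx
  exact hx rfl

lemma two_le_of_mem_ofCounts {b : Fin N → ℕ} (hb : ∀ j : Fin N, (j : ℕ) < 2 → b j = 0)
    {x : ℕ} (hx : x ∈ ofCounts b) : 2 ≤ x := by
  have hxN := lt_of_mem_ofCounts hx
  by_contra h
  rw [← Multiset.count_ne_zero, count_ofCounts, dif_pos hxN] at hx
  exact hx (hb _ (by simpa using h))

variable {s : Multiset ℕ}

lemma ofCounts_count (hs : ∀ x ∈ s, x < N) :
    ofCounts (fun j : Fin N => s.count (j : ℕ)) = s := by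
  ext k
  rw [count_ofCounts]
  split_ifs with h
  · rfl
  · exact (Multiset.count_eq_zero.2 fun hk => h (hs k hk)).symm

lemma card_eq_sum_count_fin (hs : ∀ x ∈ s, x < N) :
    s.card = ∑ j : Fin N, s.count (j : ℕ) := by
  rw [Fin.sum_univ_eq_sum_range (fun j => s.count j),
    Multiset.sum_count_eq_card fun x hx => mem_range.2 (hs x hx)]

lemma sum_eq_sum_mul_count_fin (hs : ∀ x ∈ s, x < N) :
    s.sum = ∑ j : Fin N, (j : ℕ) * s.count (j : ℕ) := by
  rw [Fin.sum_univ_eq_sum_range (fun j => j * s.count j),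
    sum_multiset_count_of_subset s (range N) fun x hx => mem_range.2 (hs x (by simpa using hx))]
  simp only [smul_eq_mul, mul_comm]

lemma countFactorialProd_eq_prod_fin (hs : ∀ x ∈ s, x < N) :
    countFactorialProd s = ∏ j : Fin N, (s.count (j : ℕ))! := by
  rw [Fin.prod_univ_eq_prod_range (fun j => (s.count j)!), countFactorialProd]
  exact prod_subset (fun x hx => mem_range.2 (hs x (by simpa using hx))) fun x _ hx => by
    rw [Multiset.count_eq_zero.2 (by simpa using hx), factorial_zero]

lemma logTerm_eq_prod_fin {K : Type*} [Field K] (v : ℕ → K) (hs : ∀ x ∈ s, x < N) :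
    logTerm v s =
      (-1) ^ ((∑ j : Fin N, s.count (j : ℕ)) - 1) * ((∑ j : Fin N, s.count (j : ℕ)) - 1)! /
        (∏ j : Fin N, (s.count (j : ℕ))! : ℕ) *
        ∏ j : Fin N, v (j : ℕ) ^ s.count (j : ℕ) := by
  rw [logTerm, card_eq_sum_count_fin hs, countFactorialProd_eq_prod_fin hs,
    Fin.prod_univ_eq_prod_range (fun j => v j ^ s.count j), prod_multiset_map_count]
  congr 1
  exact prod_subset (fun x hx => mem_range.2 (hs x (by simpa using hx))) fun x _ hx => by
    rw [Multiset.count_eq_zero.2 (by simpa using hx), pow_zero]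

end Counts

section Partition

open Nat.Partition

variable {K : Type*} [Field K] [CharZero K] (v : ℕ → K)

def logCoeff (m : ℕ) : K := ∑ p ∈ restricted m (2 ≤ ·), logTerm v p.parts

def invCoeff (m : ℕ) : K := ∑ p ∈ restricted m (2 ≤ ·), invTerm v p.parts

lemma mem_Icc_of_mem_restricted {m : ℕ} {p : m.Partition} (hp : p ∈ restricted m (2 ≤ ·))
    {x : ℕ} (hx : x ∈ p.parts) : x ∈ Icc 2 m :=
  mem_Icc.2 ⟨(mem_filter.1 hp).2 x hx, le_of_mem_parts hx⟩

lemma sum_count_mul_logTerm {m k : ℕ} (hk : 2 ≤ k) (hkm : k ≤ m) :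
    ∑ p ∈ restricted m (2 ≤ ·), (p.parts.count k : K) * logTerm v p.parts =
      v k * invCoeff v (m - k) := by
  rw [← sum_filter_of_ne (p := fun p => k ∈ p.parts) fun p _ h => by
      by_contra hkp; simp [Multiset.count_eq_zero.2 hkp] at h,
    ← sum_subtype_eq_sum_filter, invCoeff, mul_sum]
  refine sum_equiv (partitionWithPartEquiv (by omega) hkm) (fun p => ?_) (fun p _ => ?_)
  · have hp := Multiset.cons_erase p.2
    simp only [mem_subtype, restricted, mem_filter, mem_univ, true_and,
      partitionWithPartEquiv_apply_parts]
    conv_lhs => rw [← hp]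
    simp [hk]
  · rw [partitionWithPartEquiv_apply_parts, ← count_add_one_mul_logTerm_cons,
      ← Nat.cast_add_one, ← Multiset.count_cons_self, Multiset.cons_erase p.2]

lemma invCoeff_add_sum (m : ℕ) :
    invCoeff v m + ∑ k ∈ Icc 2 m, v k * invCoeff v (m - k) = if m = 0 then 1 else 0 := by
  rcases eq_or_ne m 0 with rfl | hm
  · simp [invCoeff, restricted]
  have hsum : ∑ k ∈ Icc 2 m, v k * invCoeff v (m - k) =
      ∑ p ∈ restricted m (2 ≤ ·), (p.parts.card : K) * logTerm v p.parts := by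
    rw [← sum_congr rfl fun k hk => sum_count_mul_logTerm v (mem_Icc.1 hk).1 (mem_Icc.1 hk).2,
      sum_comm]
    refine sum_congr rfl fun p hp => ?_
    rw [← sum_mul, ← Nat.cast_sum,
      Multiset.sum_count_eq_card fun x hx => mem_Icc_of_mem_restricted hp hx]
  rw [if_neg hm, hsum, invCoeff, ← sum_add_distrib]
  refine sum_eq_zero fun p _ => ?_
  have hp : p.parts ≠ 0 := fun h => hm (by simpa [h] using p.parts_sum.symm)
  rw [card_mul_logTerm v hp, add_neg_cancel]

lemma natCast_mul_logCoeff (m : ℕ) :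
    (m : K) * logCoeff v m = ∑ k ∈ Icc 2 m, (k : K) * v k * invCoeff v (m - k) := by
  have hk : ∀ k ∈ Icc 2 m, (k : K) * v k * invCoeff v (m - k) =
      ∑ p ∈ restricted m (2 ≤ ·), (k : K) * p.parts.count k * logTerm v p.parts := by
    intro k hk
    rw [mul_assoc, ← sum_count_mul_logTerm v (mem_Icc.1 hk).1 (mem_Icc.1 hk).2, mul_sum]
    simp only [mul_assoc]
  rw [sum_congr rfl hk, sum_comm, logCoeff, mul_sum]
  refine sum_congr rfl fun p hp => ?_
  have hm := sum_multiset_count_of_subset p.parts (Icc 2 m) fun x hx =>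
    mem_Icc_of_mem_restricted hp (Multiset.mem_toFinset.1 hx)
  rw [p.parts_sum] at hm
  rw [← sum_mul]
  congr 1
  exact_mod_cast hm.trans (sum_congr rfl fun i _ => mul_comm _ _)

lemma natCast_mul_logCoeff_add_sum {n : ℕ} (hn : 2 ≤ n) :
    (n : K) * logCoeff v n + ∑ j ∈ Icc 2 (n - 2), (j : K) * v (n - j) * logCoeff v j =
      n * v n := by
  have hconv : ∑ j ∈ Icc 2 (n - 2), (j : K) * v (n - j) * logCoeff v j =
      ∑ k ∈ Icc 2 n, (k : K) * v k * ∑ i ∈ Icc 2 (n - k), v i * invCoeff v (n - k - i) :=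
    calc _ = ∑ j ∈ Icc 2 (n - 2), ∑ k ∈ Icc 2 j,
          (k : K) * v k * (v (n - j) * invCoeff v (j - k)) := by
          refine sum_congr rfl fun j _ => ?_
          rw [mul_right_comm, natCast_mul_logCoeff, sum_mul]
          exact sum_congr rfl fun k _ => by ring
      _ = ∑ k ∈ Icc 2 n, ∑ j ∈ Icc k (n - 2),
          (k : K) * v k * (v (n - j) * invCoeff v (j - k)) :=
          sum_comm' fun j k => by simp only [mem_Icc]; omega
      _ = _ := by
          refine sum_congr rfl fun k hk => ?_
          rw [← mul_sum]
          congr 1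
          refine sum_nbij' (n - ·) (n - ·) ?_ ?_ ?_ ?_ ?_ <;> intro j hj <;>
            simp only [mem_Icc] at hj hk ⊢
          · omega
          · omega
          · omega
          · omega
          · rw [show n - k - (n - j) = j - k by omega]
  rw [hconv, natCast_mul_logCoeff, ← sum_add_distrib,
    sum_eq_single_of_mem n (mem_Icc.2 ⟨hn, le_rfl⟩) fun k hk hkn => by
      rw [← mul_add, invCoeff_add_sum, if_neg (by simp only [mem_Icc] at hk; omega), mul_zero]]
  rw [← mul_add, invCoeff_add_sum, Nat.sub_self, if_pos rfl, mul_one]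

lemma eq_logCoeff_of_natCast_mul_add_sum {f : ℕ → K}
    (hf : ∀ n : ℕ, 2 ≤ n →
      (n : K) * f n + ∑ j ∈ Icc 2 (n - 2), (j : K) * v (n - j) * f j = n * v n) :
    ∀ n, 2 ≤ n → f n = logCoeff v n := by
  intro n
  induction n using Nat.strong_induction_on with
  | _ n ih =>
    intro hn
    have hsum : ∑ j ∈ Icc 2 (n - 2), (j : K) * v (n - j) * f j =
        ∑ j ∈ Icc 2 (n - 2), (j : K) * v (n - j) * logCoeff v j :=
      sum_congr rfl fun j hj => by
        simp only [mem_Icc] at hj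
        rw [ih j (by omega) hj.1]
    have hf' := hf n hn
    rw [hsum, ← natCast_mul_logCoeff_add_sum v hn, add_left_inj] at hf'
    exact mul_left_cancel₀ (Nat.cast_ne_zero.2 (by omega)) hf'

lemma lt_sub_one_of_mem_parts {n : ℕ} {p : n.Partition} (hp : p ∈ restricted n (2 ≤ ·))
    (hne : p ≠ indiscrete n) {x : ℕ} (hx : x ∈ p.parts) : x < n - 1 := by
  by_contra hlt
  have htwo : ∀ y ∈ p.parts, 2 ≤ y := (mem_filter.1 hp).2
  have hrest : (p.parts.erase x).sum + x = n := by
    simpa [add_comm, p.parts_sum] using congrArg Multiset.sum (Multiset.cons_erase hx)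
  have hempty : p.parts.erase x = 0 := Multiset.eq_zero_of_forall_notMem fun y hy => by
    have := Multiset.le_sum_of_mem hy
    have := htwo y (Multiset.mem_of_mem_erase hy)
    omega
  rw [hempty, Multiset.sum_zero, zero_add] at hrest
  have hn : n ≠ 0 := by have := htwo x hx; omega
  refine hne (Nat.Partition.ext ?_)
  rw [← Multiset.cons_erase hx, hempty, hrest, indiscrete_parts hn]
  rfl

end Partition

section Expansion

open Nat.Partition

variable {K : Type*} [Field K] (v : ℕ → K)

lemma sum_piFinset_filter_eq_logCoeff_sub {n : ℕ} (hn : 2 ≤ n) :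
    ∑ b ∈ (Fintype.piFinset fun _ : Fin (n - 1) => Finset.range (n + 1)).filter
        (fun b : Fin (n - 1) → ℕ =>
          (∑ j : Fin (n - 1), (j : ℕ) * b j = n) ∧
          ∀ j : Fin (n - 1), (j : ℕ) < 2 → b j = 0),
      (-1 : K) ^ ((∑ j : Fin (n - 1), b j) - 1) *
        ((∑ j : Fin (n - 1), b j) - 1).factorial /
        (∏ j : Fin (n - 1), (b j).factorial : ℕ) *
        ∏ j : Fin (n - 1), v (j : ℕ) ^ b j =
      logCoeff v n - v n := by
  have hind : indiscrete n ∈ restricted n (2 ≤ ·) := by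
    simpa [restricted, indiscrete_parts (by omega : n ≠ 0)] using hn
  rw [logCoeff, ← add_sum_erase _ _ hind, indiscrete_parts (by omega), logTerm_singleton,
    add_sub_cancel_left]
  symm
  refine sum_bij' (fun p _ (j : Fin (n - 1)) => p.parts.count (j : ℕ))
    (fun b hb => ⟨ofCounts b, fun hx => ?_, ?_⟩) ?_ ?_ ?_ ?_ ?_
  · have := two_le_of_mem_ofCounts (mem_filter.1 hb).2.2 hx
    omega
  · rw [sum_eq_sum_mul_count_fin fun _ => lt_of_mem_ofCounts]
    simpa using (mem_filter.1 hb).2.1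
  · intro p hp
    obtain ⟨hne, hp⟩ := mem_erase.1 hp
    have hlt := fun x => lt_sub_one_of_mem_parts hp hne (x := x)
    have htwo : ∀ x ∈ p.parts, 2 ≤ x := (mem_filter.1 hp).2
    refine mem_filter.2 ⟨Fintype.mem_piFinset.2 fun j => mem_range.2 ?_, ?_, fun j hj => ?_⟩
    · have := Multiset.count_le_card (j : ℕ) p.parts
      have := Multiset.card_nsmul_le_sum fun x hx => (htwo x hx).trans' one_le_two
      rw [p.parts_sum, smul_eq_mul, mul_one] at this
      omega
    · rw [← sum_eq_sum_mul_count_fin hlt, p.parts_sum]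
    · exact Multiset.count_eq_zero.2 fun h => by have := htwo _ h; omega
  · intro b hb
    refine mem_erase.2 ⟨fun h => ?_,
      mem_filter.2 ⟨mem_univ _, fun x => two_le_of_mem_ofCounts (mem_filter.1 hb).2.2⟩⟩
    have hcount := congrArg (fun p : n.Partition => p.parts.count n) h
    simp only [indiscrete_parts (by omega : n ≠ 0), Multiset.count_singleton_self,
      count_ofCounts, dif_neg (by omega : ¬n < n - 1)] at hcount
    exact zero_ne_one hcount
  · intro p hp
    obtain ⟨hne, hp⟩ := mem_erase.1 hp
    exact Nat.Partition.ext (ofCounts_count fun x => lt_sub_one_of_mem_parts hp hne)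
  · intro b hb
    funext j
    exact count_ofCounts_fin b j
  · intro p hp
    obtain ⟨hne, hp⟩ := mem_erase.1 hp
    exact logTerm_eq_prod_fin v fun x => lt_sub_one_of_mem_parts hp hne

end Expansion

end LogSeries

/-- With `M` defined by the recursion `M_2 = M_3 = 0`,
`M_n = -(1/n) ∑_{j=2}^{n-2} j v_{n-j}(v_j + M_j)`, for every `n ≥ 4`:
`M_n = ∑_{2b₂+⋯+(n-2)b_{n-2} = n} (-1)^{B-1} (B-1)!/(b₂!⋯b_{n-2}!) v₂^{b₂}⋯v_{n-2}^{b_{n-2}}`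
where `B = b₂ + ⋯ + b_{n-2}`. -/
theorem stmt12 (v M : ℕ → ℝ)
    (hM2 : M 2 = 0) (hM3 : M 3 = 0)
    (hMrec : ∀ n ≥ 4, M n = -(1 / (n : ℝ)) *
      ∑ j ∈ Finset.Icc 2 (n - 2), (j : ℝ) * v (n - j) * (v j + M j)) :
    ∀ n ≥ 4, M n =
      ∑ b ∈ (Fintype.piFinset fun _ : Fin (n - 1) => Finset.range (n + 1)).filter
          (fun b : Fin (n - 1) → ℕ =>
            (∑ j : Fin (n - 1), (j : ℕ) * b j = n) ∧
            ∀ j : Fin (n - 1), (j : ℕ) < 2 → b j = 0),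
        (-1 : ℝ) ^ ((∑ j : Fin (n - 1), b j) - 1) *
          ((∑ j : Fin (n - 1), b j) - 1).factorial /
          (∏ j : Fin (n - 1), (b j).factorial : ℕ) *
          ∏ j : Fin (n - 1), v (j : ℕ) ^ b j := by
  have hlog := LogSeries.eq_logCoeff_of_natCast_mul_add_sum v (f := fun n => v n + M n)
    fun n hn => by
      rcases (by omega : n = 2 ∨ n = 3 ∨ 4 ≤ n) with rfl | rfl | h4
      · simp [hM2]
      · simp [hM3]
      · have hn0 : (n : ℝ) ≠ 0 := by positivity
        rw [hMrec n h4]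
        field_simp
        ring
  intro n hn
  rw [LogSeries.sum_piFinset_filter_eq_logCoeff_sub v (by omega), ← hlog n (by omega)]
  ring
end

section
/- With notation as above (u characteristic function of S ∋ 1, v_n = u(n)-u(n-1), P the prime zeta function, M_n the partition polynomials), log h(E(S)) = P(2)v_2 + P(3)v_3 + ∑_{n=4}^∞ P(n)(v_n + M_n(v_2,…,v_{n-2})). -/
/-
Let `F(x) = 1 + ∑_{i≥2} v_i xⁱ` and `G(x) = ∑_{n≥2} (v_n + M_n) xⁿ`. The recursion for `M_n` is
the coefficientwise form of `F' = F G'`, and since `|v_i| ≤ 1` it propagates the bound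
`|v_n + M_n| ≤ Kⁿ` for any `K ≥ 1` with `K² ≥ K + 1`. Taking `K = 1.7 < 2`, both series converge
on a neighbourhood of `[-1/2, 1/2]`, which contains every `1/p`; there `exp(-G) F` has zero
derivative, so `F = exp G`. Hence `log F(1/p) = ∑ₙ (v_n + M_n) p⁻ⁿ`, and summing over the primes
and exchanging the absolutely convergent double series gives `∑ₙ P(n) (v_n + M_n)`.
-/

open scoped Classical

open Finset Real

section PowerSeries

variable {a : ℕ → ℝ} {K : ℝ}

lemma nonneg_of_abs_le_pow (ha : ∀ n, |a n| ≤ K ^ n) : 0 ≤ K := by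
  simpa using (abs_nonneg (a 1)).trans (ha 1)

lemma summable_succ_mul_pow_mul_pow {r : ℝ} (hK : 0 ≤ K) (hr : 0 ≤ r) (hrK : r * K < 1) :
    Summable fun n : ℕ => (n + 1) * K ^ (n + 1) * r ^ n := by
  have hq : ‖r * K‖ < 1 := by rwa [Real.norm_of_nonneg (by positivity)]
  refine (((summable_pow_mul_geometric_of_norm_lt_one 1 hq).add
    (summable_geometric_of_norm_lt_one hq)).mul_left K).congr fun n => ?_
  ring

lemma summable_norm_mul_pow (ha : ∀ n, |a n| ≤ K ^ n) {y : ℝ} (hy : |y| * K < 1) :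
    Summable fun n => ‖a n * y ^ n‖ := by
  refine Summable.of_nonneg_of_le (fun n => norm_nonneg _) (fun n => ?_)
    (summable_geometric_of_lt_one (mul_nonneg (abs_nonneg y) (nonneg_of_abs_le_pow ha)) hy)
  rw [norm_mul, norm_pow, Real.norm_eq_abs, Real.norm_eq_abs, mul_pow, mul_comm]
  gcongr
  exact ha n

lemma summable_norm_succ_mul_pow (ha : ∀ n, |a n| ≤ K ^ n) {y : ℝ} (hy : |y| * K < 1) :
    Summable fun n : ℕ => ‖(n + 1) * a (n + 1) * y ^ n‖ := by
  refine Summable.of_nonneg_of_le (fun n => norm_nonneg _) (fun n => ?_)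
    (summable_succ_mul_pow_mul_pow (nonneg_of_abs_le_pow ha) (abs_nonneg y) hy)
  rw [norm_mul, norm_mul, norm_pow, Real.norm_eq_abs, Real.norm_eq_abs, Real.norm_eq_abs,
    abs_of_nonneg (by positivity : (0 : ℝ) ≤ n + 1)]
  gcongr
  exact ha _

lemma hasDerivAt_tsum_mul_pow (ha : ∀ n, |a n| ≤ K ^ n) {ρ y : ℝ} (hρ : ρ * K < 1)
    (hy : |y| < ρ) :
    HasDerivAt (fun z => ∑' n, a n * z ^ n) (∑' n : ℕ, (n + 1) * a (n + 1) * y ^ n) y := by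
  have hK := nonneg_of_abs_le_pow ha
  have hsucc : HasDerivAt (fun z => ∑' n, a (n + 1) * z ^ (n + 1))
      (∑' n : ℕ, (n + 1) * a (n + 1) * y ^ n) y := by
    refine hasDerivAt_tsum_of_isPreconnected (g := fun n z => a (n + 1) * z ^ (n + 1))
      (g' := fun n z => (n + 1) * a (n + 1) * z ^ n) (t := Set.Ioo (-ρ) ρ) (y₀ := 0)
      (summable_succ_mul_pow_mul_pow hK ((abs_nonneg y).trans hy.le) hρ) isOpen_Ioo
      isPreconnected_Ioo (fun n z _ => ?_) (fun n z hz => ?_) ?_ ?_ (abs_lt.mp hy)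
    · simpa [mul_comm, mul_left_comm] using (hasDerivAt_pow (n + 1) z).const_mul (a (n + 1))
    · rw [norm_mul, norm_mul, norm_pow, Real.norm_eq_abs, Real.norm_eq_abs, Real.norm_eq_abs,
        abs_of_nonneg (by positivity : (0 : ℝ) ≤ n + 1)]
      gcongr
      exacts [ha _, (abs_lt.mpr hz).le]
    · exact ⟨by linarith [abs_nonneg y], by linarith [abs_nonneg y]⟩
    · simp
  refine (hsucc.const_add (a 0)).congr_of_eventuallyEq ?_
  filter_upwards [Ioo_mem_nhds (abs_lt.mp hy).1 (abs_lt.mp hy).2] with z hz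
  have hz' : |z| * K < 1 := (mul_le_mul_of_nonneg_right (abs_lt.mpr hz).le hK).trans_lt hρ
  simpa using (summable_norm_mul_pow ha hz').of_norm.tsum_eq_zero_add

end PowerSeries

lemma eq_mul_exp_sub_of_hasDerivAt {f g f' g' : ℝ → ℝ} {s : Set ℝ} (hs : IsOpen s)
    (hs' : IsPreconnected s) (hf : ∀ y ∈ s, HasDerivAt f (f' y) y)
    (hg : ∀ y ∈ s, HasDerivAt g (g' y) y) (hfg : ∀ y ∈ s, f' y = f y * g' y) {x₀ x : ℝ}
    (hx₀ : x₀ ∈ s) (hx : x ∈ s) : f x = f x₀ * exp (g x - g x₀) := by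
  have hφ : ∀ y ∈ s, HasDerivAt (fun z => f z * exp (-g z)) 0 y := fun y hy =>
    ((hf y hy).mul (hg y hy).neg.exp).congr_deriv (by rw [hfg y hy]; ring)
  have hconst : f x * exp (-g x) = f x₀ * exp (-g x₀) :=
    hs.is_const_of_deriv_eq_zero hs' (fun y hy => (hφ y hy).differentiableAt.differentiableWithinAt)
      (fun y hy => (hφ y hy).deriv) hx hx₀
  calc f x = f x * exp (-g x) * exp (g x) := by
        rw [mul_assoc, ← exp_add, neg_add_cancel, exp_zero, mul_one]
    _ = f x₀ * exp (g x - g x₀) := by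
        rw [hconst, mul_assoc, ← exp_add, neg_add_eq_sub]

lemma tsum_mul_zero_pow (a : ℕ → ℝ) : ∑' n, a n * (0 : ℝ) ^ n = a 0 :=
  (tsum_eq_single 0 fun n hn => by simp [hn]).trans (by simp)

lemma tsum_mul_pow_eq_exp_tsum {e c : ℕ → ℝ} {K ρ x : ℝ} (he : ∀ n, |e n| ≤ K ^ n)
    (hc : ∀ n, |c n| ≤ K ^ n) (he0 : e 0 = 1) (hc0 : c 0 = 0)
    -- coefficientwise `x F'(x) = F(x) * x G'(x)` for `F = ∑ eₙ xⁿ`, `G = ∑ cₙ xⁿ`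
    (hcoeff : ∀ n, ∑ p ∈ antidiagonal n, e p.1 * (p.2 * c p.2) = n * e n)
    (hρ : ρ * K < 1) (hx : |x| < ρ) :
    ∑' n, e n * x ^ n = exp (∑' n, c n * x ^ n) := by
  have hK := nonneg_of_abs_le_pow he
  have hcoeff' : ∀ m, ∑ p ∈ antidiagonal m, e p.1 * ((p.2 + 1) * c (p.2 + 1))
      = (m + 1) * e (m + 1) := fun m => by
    simpa [Nat.sum_antidiagonal_succ'] using hcoeff (m + 1)
  have hODE : ∀ y ∈ Set.Ioo (-ρ) ρ, ∑' n : ℕ, (n + 1) * e (n + 1) * y ^ n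
      = (∑' n, e n * y ^ n) * ∑' n : ℕ, (n + 1) * c (n + 1) * y ^ n := fun y hy => by
    have hyK : |y| * K < 1 := (mul_le_mul_of_nonneg_right (abs_lt.mpr hy).le hK).trans_lt hρ
    rw [tsum_mul_tsum_eq_tsum_sum_antidiagonal_of_summable_norm (summable_norm_mul_pow he hyK)
      (summable_norm_succ_mul_pow hc hyK)]
    refine tsum_congr fun m => ?_
    rw [← hcoeff' m, sum_mul]
    refine sum_congr rfl fun p hp => ?_
    rw [← mem_antidiagonal.mp hp, pow_add]
    ring
  have h0 : (0 : ℝ) ∈ Set.Ioo (-ρ) ρ := ⟨by linarith [abs_nonneg x], by linarith [abs_nonneg x]⟩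
  have := eq_mul_exp_sub_of_hasDerivAt isOpen_Ioo isPreconnected_Ioo
    (fun y hy => hasDerivAt_tsum_mul_pow he hρ (abs_lt.mpr hy))
    (fun y hy => hasDerivAt_tsum_mul_pow hc hρ (abs_lt.mpr hy)) hODE h0 (abs_lt.mp hx)
  rwa [tsum_mul_zero_pow, tsum_mul_zero_pow, he0, hc0, one_mul, sub_zero] at this

/-- With `e₀ = 1` and `e₁ = c₁ = 0`, this is `n eₙ = ∑_{j ≤ n} j c_j e_{n-j}` (the coefficients of
`F' = F G'`) with its vanishing terms dropped, i.e. the recursion defining `M_n` for `c = v + M`. -/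
def IsLogRecursion (e c : ℕ → ℝ) : Prop :=
  ∀ n : ℕ, 2 ≤ n → (n : ℝ) * c n = n * e n - ∑ j ∈ Icc 2 (n - 2), (j : ℝ) * e (n - j) * c j

lemma sum_Icc_mul_pow_le {K : ℝ} (hK1 : 1 ≤ K) (hK : K + 1 ≤ K ^ 2) (m : ℕ) :
    ∑ j ∈ Icc 2 m, (j : ℝ) * K ^ j ≤ (m + 2) * K ^ (m + 2) - (m + 2) := by
  have hpow : ∀ k, 1 ≤ K ^ k := fun k => one_le_pow₀ hK1
  induction m with
  | zero =>
    rw [Icc_eq_empty (by norm_num), sum_empty]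
    push_cast
    linarith [hpow 2]
  | succ m ih =>
    rcases Nat.eq_zero_or_pos m with rfl | hm
    · rw [Icc_eq_empty (by norm_num), sum_empty]
      push_cast
      linarith [hpow 3]
    · rw [sum_Icc_succ_top (by omega), pow_add K (m + 1) 2]
      rw [pow_succ K (m + 1)] at ih
      have hstep : (m + 3) * K ^ (m + 1) * (K + 1) ≤ (m + 3) * K ^ (m + 1) * K ^ 2 :=
        mul_le_mul_of_nonneg_left hK (by positivity)
      have hKm : 1 ≤ K ^ (m + 1) * K := one_le_mul_of_one_le_of_one_le (hpow _) hK1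
      push_cast
      linarith [hpow (m + 1)]

lemma abs_le_pow_of_isLogRecursion {e c : ℕ → ℝ} {K : ℝ} (hK1 : 1 ≤ K) (hK : K + 1 ≤ K ^ 2)
    (he : ∀ n, |e n| ≤ 1) (hc0 : c 0 = 0) (hc1 : c 1 = 0)
    (hrec : IsLogRecursion e c) (n : ℕ) : |c n| ≤ K ^ n := by
  induction n using Nat.strong_induction_on with
  | _ n ih =>
  match n with
  | 0 => simp [hc0]
  | 1 => simpa [hc1] using zero_le_one.trans hK1
  | m + 2 =>
    have hsum : |∑ j ∈ Icc 2 m, (j : ℝ) * e (m + 2 - j) * c j|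
        ≤ ∑ j ∈ Icc 2 m, (j : ℝ) * K ^ j := by
      refine (abs_sum_le_sum_abs _ _).trans (sum_le_sum fun j hj => ?_)
      have hj : j < m + 2 := by rw [mem_Icc] at hj; omega
      rw [abs_mul, abs_mul, Nat.abs_cast]
      calc (j : ℝ) * |e (m + 2 - j)| * |c j| ≤ j * 1 * K ^ j := by
            gcongr
            exacts [he _, ih j hj]
        _ = j * K ^ j := by ring
    have hrec' := hrec (m + 2) (by omega)
    rw [Nat.add_sub_cancel] at hrec'
    push_cast at hrec'
    have key : (m + 2 : ℝ) * |c (m + 2)| ≤ (m + 2) * K ^ (m + 2) :=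
      calc (m + 2 : ℝ) * |c (m + 2)|
          = |(m + 2) * e (m + 2) - ∑ j ∈ Icc 2 m, (j : ℝ) * e (m + 2 - j) * c j| := by
            rw [← hrec', abs_mul, abs_of_pos (by positivity : (0 : ℝ) < m + 2)]
        _ ≤ (m + 2) * 1 + ∑ j ∈ Icc 2 m, (j : ℝ) * K ^ j := by
            refine (abs_sub _ _).trans (add_le_add ?_ hsum)
            rw [abs_mul, abs_of_pos (by positivity)]
            gcongr
            exact he _
        _ ≤ (m + 2) * K ^ (m + 2) := by linarith [sum_Icc_mul_pow_le hK1 hK m]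
    exact le_of_mul_le_mul_left key (by positivity)

lemma sum_antidiagonal_mul_eq_of_isLogRecursion {e c : ℕ → ℝ} (he0 : e 0 = 1) (he1 : e 1 = 0)
    (hc1 : c 1 = 0) (hrec : IsLogRecursion e c)
    (n : ℕ) : ∑ p ∈ antidiagonal n, e p.1 * (p.2 * c p.2) = n * e n := by
  match n with
  | 0 => simp
  | 1 => simp [Nat.antidiagonal_succ, he1, hc1]
  | m + 2 =>
    have hlow : ∑ j ∈ range (m + 1), e (m + 2 - j) * (j * c j)
        = ∑ j ∈ Icc 2 m, (j : ℝ) * e (m + 2 - j) * c j := by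
      symm
      refine sum_subset_zero_on_sdiff (fun j hj => ?_) (fun j hj => ?_) (fun j _ => by ring)
      · rw [mem_Icc] at hj; rw [mem_range]; omega
      · rw [mem_sdiff, mem_range, mem_Icc] at hj
        rcases (by omega : j = 0 ∨ j = 1) with rfl | rfl <;> simp [hc1]
    have hrec' := hrec (m + 2) (by omega)
    rw [Nat.add_sub_cancel] at hrec'
    rw [← Nat.sum_antidiagonal_swap]
    simp only [Prod.fst_swap, Prod.snd_swap]
    rw [Nat.sum_antidiagonal_eq_sum_range_succ (fun j i => e i * (j * c j)), sum_range_succ,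
      sum_range_succ, hlow]
    simp only [show m + 2 - (m + 1) = 1 by omega, Nat.sub_self, he0, he1]
    linarith

lemma tsum_mul_pow_eq_exp_of_isLogRecursion {e c : ℕ → ℝ} (he : ∀ n, |e n| ≤ 1)
    (he0 : e 0 = 1) (he1 : e 1 = 0) (hc0 : c 0 = 0) (hc1 : c 1 = 0) (hrec : IsLogRecursion e c)
    {x : ℝ} (hx : |x| ≤ 1 / 2) : ∑' n, e n * x ^ n = exp (∑' n, c n * x ^ n) :=
  -- `K = 1.7` satisfies `K² ≥ K + 1`, and `1 / 2 < 0.55 < 1 / K`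
  tsum_mul_pow_eq_exp_tsum (fun n => (he n).trans (one_le_pow₀ (by norm_num)))
    (abs_le_pow_of_isLogRecursion (K := 1.7) (by norm_num) (by norm_num) he hc0 hc1 hrec) he0 hc0
    (sum_antidiagonal_mul_eq_of_isLogRecursion he0 he1 hc1 hrec) (ρ := 0.55) (by norm_num)
    (by linarith)

lemma summable_one_div_prime_sq : Summable fun p : Nat.Primes => 1 / (p : ℝ) ^ 2 :=
  (Real.summable_one_div_nat_pow.mpr one_lt_two).comp_injective Subtype.val_injective

lemma summable_uncurry_div_prime_pow {a : ℕ → ℝ} {K : ℝ} (ha : ∀ n, |a n| ≤ K ^ n) (hK : K < 2)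
    (ha0 : a 0 = 0) (ha1 : a 1 = 0) :
    Summable (Function.uncurry fun (p : Nat.Primes) (n : ℕ) => a n / (p : ℝ) ^ n) := by
  have hK0 := nonneg_of_abs_le_pow ha
  have hgeo : Summable fun n : ℕ => (K / 2) ^ n :=
    summable_geometric_of_lt_one (by positivity) (by linarith)
  refine Summable.of_norm_bounded ((summable_one_div_prime_sq.mul_left 4).mul_of_nonneg hgeo
    (fun _ => by positivity) (fun _ => by positivity)) ?_
  rintro ⟨p, n⟩
  have hp : (2 : ℝ) ≤ p := by exact_mod_cast p.2.two_le
  have hp0 : (p : ℝ) ≠ 0 := by positivity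
  match n with
  | 0 => simp [ha0]
  | 1 => simp [ha1]; positivity
  | n + 2 =>
    have h2p : (2 / p : ℝ) ^ n ≤ 1 :=
      pow_le_one₀ (by positivity) ((div_le_one (by positivity)).mpr hp)
    calc ‖a (n + 2) / (p : ℝ) ^ (n + 2)‖ = |a (n + 2)| / (p : ℝ) ^ (n + 2) := by
          rw [norm_div, norm_pow, Real.norm_eq_abs, Real.norm_of_nonneg (by positivity)]
      _ ≤ K ^ (n + 2) / (p : ℝ) ^ (n + 2) := by gcongr; exact ha _
      _ = 4 * (1 / (p : ℝ) ^ 2) * (K / 2) ^ (n + 2) * (2 / p) ^ n := by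
          rw [div_pow, div_pow]
          field_simp
          ring
      _ ≤ 4 * (1 / (p : ℝ) ^ 2) * (K / 2) ^ (n + 2) := by
          refine mul_le_of_le_one_right (by positivity) h2p

lemma hasSum_mul_tsum_one_div_prime_pow {a : ℕ → ℝ}
    (h : Summable (Function.uncurry fun (p : Nat.Primes) (n : ℕ) => a n / (p : ℝ) ^ n)) :
    HasSum (fun n => a n * ∑' p : Nat.Primes, 1 / (p : ℝ) ^ n)
      (∑' p : Nat.Primes, ∑' n, a n / (p : ℝ) ^ n) := by
  have hfiber : ∀ n, a n * ∑' p : Nat.Primes, 1 / (p : ℝ) ^ n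
      = ∑' p : Nat.Primes, a n / (p : ℝ) ^ n := fun n => by
    rw [← tsum_mul_left]
    simp only [mul_one_div]
  simp only [hfiber, ← h.tsum_comm]
  exact h.prod_symm.prod.hasSum

theorem hasSum_log_tprod_of_isLogRecursion {e c : ℕ → ℝ} (he : ∀ n, |e n| ≤ 1) (he0 : e 0 = 1)
    (he1 : e 1 = 0) (hc0 : c 0 = 0) (hc1 : c 1 = 0) (hrec : IsLogRecursion e c) :
    HasSum (fun n => c n * ∑' p : Nat.Primes, 1 / (p : ℝ) ^ n)
      (log (∏' p : Nat.Primes, ∑' n, e n / (p : ℝ) ^ n)) := by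
  have hdiv : ∀ (a : ℕ → ℝ) (p : Nat.Primes),
      ∑' n, a n * (p : ℝ)⁻¹ ^ n = ∑' n, a n / (p : ℝ) ^ n :=
    fun a p => tsum_congr fun n => by rw [inv_pow, div_eq_mul_inv]
  have hexp : ∀ p : Nat.Primes, ∑' n, e n / (p : ℝ) ^ n = exp (∑' n, c n / (p : ℝ) ^ n) := by
    intro p
    have hp : (2 : ℝ) ≤ p := by exact_mod_cast p.2.two_le
    rw [← hdiv, ← hdiv]
    refine tsum_mul_pow_eq_exp_of_isLogRecursion he he0 he1 hc0 hc1 hrec ?_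
    rw [abs_inv, abs_of_pos (by positivity), ← one_div]
    exact one_div_le_one_div_of_le two_pos hp
  have hsum := summable_uncurry_div_prime_pow
    (abs_le_pow_of_isLogRecursion (K := 1.7) (by norm_num) (by norm_num) he hc0 hc1 hrec)
    (by norm_num) hc0 hc1
  simp only [hexp]
  rw [← rexp_tsum_eq_tprod (fun p => exp_pos _) (by simpa using hsum.prod), log_exp]
  simpa using hasSum_mul_tsum_one_div_prime_pow hsum

/- `localCoeff v` and `logCoeff v M` are the coefficient sequences of `1 + ∑_{i≥2} v_i xⁱ` and of
`∑_{n≥2} (v_n + M_n) xⁿ`. -/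
def localCoeff (v : ℕ → ℝ) (n : ℕ) : ℝ :=
  if n = 0 then 1 else if n = 1 then 0 else v n

def logCoeff (v M : ℕ → ℝ) (n : ℕ) : ℝ :=
  if n < 2 then 0 else v n + M n

lemma abs_localCoeff_le_one {S : Set ℕ} {u v : ℕ → ℝ} (hu : ∀ n, u n = if n ∈ S then 1 else 0)
    (hv : ∀ n ≥ 2, v n = u n - u (n - 1)) (n : ℕ) : |localCoeff v n| ≤ 1 := by
  unfold localCoeff
  split_ifs with h0 h1
  · simp
  · simp
  · rw [hv n (by omega), hu, hu]
    split_ifs <;> norm_num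

lemma isLogRecursion_localCoeff_logCoeff {v M : ℕ → ℝ} (hM2 : M 2 = 0) (hM3 : M 3 = 0)
    (hMrec : ∀ n ≥ 4, M n = -(1 / (n : ℝ)) *
      ∑ j ∈ Icc 2 (n - 2), (j : ℝ) * v (n - j) * (v j + M j)) :
    IsLogRecursion (localCoeff v) (logCoeff v M) := by
  intro n hn
  have hsum : ∑ j ∈ Icc 2 (n - 2), (j : ℝ) * localCoeff v (n - j) * logCoeff v M j
      = ∑ j ∈ Icc 2 (n - 2), (j : ℝ) * v (n - j) * (v j + M j) :=
    sum_congr rfl fun j hj => by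
      rw [mem_Icc] at hj
      simp only [localCoeff, logCoeff, if_neg (by omega : n - j ≠ 0),
        if_neg (by omega : n - j ≠ 1), if_neg (by omega : ¬ j < 2)]
  rw [hsum]
  simp only [localCoeff, logCoeff, if_neg (by omega : n ≠ 0), if_neg (by omega : n ≠ 1),
    if_neg (by omega : ¬ n < 2)]
  rcases (by omega : n = 2 ∨ n = 3 ∨ 4 ≤ n) with rfl | rfl | h4
  · simp [hM2]
  · simp [hM3]
  · rw [hMrec n h4]
    field_simp
    ring

lemma tsum_localCoeff_div_pow {v : ℕ → ℝ} (hv : ∀ n, |localCoeff v n| ≤ 1) {x : ℝ}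
    (hx : 2 ≤ x) : ∑' n, localCoeff v n / x ^ n = 1 + ∑' i, v (i + 2) / x ^ (i + 2) := by
  have hsum : Summable fun n => localCoeff v n / x ^ n := by
    refine (summable_norm_mul_pow (K := 1) (y := x⁻¹) (by simpa using hv) ?_).of_norm.congr
      fun n => by rw [inv_pow, div_eq_mul_inv]
    rw [abs_inv, abs_of_pos (by positivity), mul_one]
    exact inv_lt_one_of_one_lt₀ (by linarith)
  rw [← hsum.sum_add_tsum_nat_add 2]
  simp [localCoeff, sum_range_succ]

theorem stmt14_general (S : Set ℕ)
    (u v : ℕ → ℝ) (hu : ∀ n, u n = if n ∈ S then 1 else 0)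
    (hv : ∀ n ≥ 2, v n = u n - u (n - 1))
    (M : ℕ → ℝ) (hM2 : M 2 = 0) (hM3 : M 3 = 0)
    (hMrec : ∀ n ≥ 4, M n = -(1 / (n : ℝ)) *
      ∑ j ∈ Finset.Icc 2 (n - 2), (j : ℝ) * v (n - j) * (v j + M j))
    (P : ℕ → ℝ) (hP : ∀ n, P n = ∑' p : Nat.Primes, 1 / (p : ℝ) ^ n)
    (loc : Nat.Primes → ℝ)
    (hloc : ∀ p : Nat.Primes, loc p = 1 + ∑' i : ℕ, v (i + 2) / (p : ℝ) ^ (i + 2)) :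
    Real.log (∏' p : Nat.Primes, loc p) =
      P 2 * v 2 + P 3 * v 3 + ∑' n : ℕ, P (n + 4) * (v (n + 4) + M (n + 4)) := by
  have hv1 := abs_localCoeff_le_one hu hv
  have hloc' : loc = fun p : Nat.Primes => ∑' n, localCoeff v n / (p : ℝ) ^ n := funext fun p => by
    rw [hloc p, tsum_localCoeff_div_pow hv1 (by exact_mod_cast p.2.two_le)]
  have hZ := hasSum_log_tprod_of_isLogRecursion hv1 (by simp [localCoeff]) (by simp [localCoeff])
    (by simp [logCoeff]) (by simp [logCoeff]) (isLogRecursion_localCoeff_logCoeff hM2 hM3 hMrec)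
  rw [← hloc'] at hZ
  simp only [← hP] at hZ
  rw [← hZ.tsum_eq, ← hZ.summable.sum_add_tsum_nat_add 4]
  simp [sum_range_succ, logCoeff, hM2, hM3, mul_comm]

/-- Theorem 2 of the paper: with `u` the characteristic function of
`S ∋ 1`, `v n = u n - u (n-1)`, `P` the prime zeta function, `M_n` the partition
polynomials (given by the recursion `M_2 = M_3 = 0`,
`M_n = -(1/n) ∑_{j=2}^{n-2} j v_{n-j}(v_j + M_j)`), and
`h(E(S)) = ∏_p (1 + ∑_{i≥2} v_i p^{-i})`, we have
`log h(E(S)) = P(2)v_2 + P(3)v_3 + ∑_{n=4}^∞ P(n)(v_n + M_n)`. -/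
theorem stmt14 (S : Set ℕ) (hS1 : (1 : ℕ) ∈ S) (hS0 : ∀ s ∈ S, 1 ≤ s)
    (u v : ℕ → ℝ) (hu : ∀ n, u n = if n ∈ S then 1 else 0)
    (hv : ∀ n ≥ 2, v n = u n - u (n - 1))
    (M : ℕ → ℝ) (hM2 : M 2 = 0) (hM3 : M 3 = 0)
    (hMrec : ∀ n ≥ 4, M n = -(1 / (n : ℝ)) *
      ∑ j ∈ Finset.Icc 2 (n - 2), (j : ℝ) * v (n - j) * (v j + M j))
    (P : ℕ → ℝ) (hP : ∀ n, P n = ∑' p : Nat.Primes, 1 / (p : ℝ) ^ n)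
    (loc : Nat.Primes → ℝ)
    (hloc : ∀ p : Nat.Primes, loc p = 1 + ∑' i : ℕ, v (i + 2) / (p : ℝ) ^ (i + 2)) :
    Real.log (∏' p : Nat.Primes, loc p) =
      P 2 * v 2 + P 3 * v 3 + ∑' n : ℕ, P (n + 4) * (v (n + 4) + M (n + 4)) :=
  stmt14_general S u v hu hv M hM2 hM3 hMrec P hP loc hloc
end

section
/- Let (v_n)_{n≥2} be integers and define t-coefficients for partitions by Corollary 2: for a partition of n+1 encoded by (b_2,…,b_{n+1}) with 2b_2+⋯+(n+1)b_{n+1} = n+1, t = (δ_{b_{n+1},1} + (-1)^{B-1}(B-1)!/(b_2!⋯b_{n-1}!))(n+1) with B = b_2+⋯+b_{n-1} (and the second term interpreted as 0 when B = 0). Then f_{n+1} = ∑_{partitions σ of n+1 with parts ≥ 2} t_σ v_σ, where v_σ = ∏ v_j^{b_j} and f_n are defined by the recurrence f_{n+1} = (n+1)v_{n+1} - ∑_{i=1}^{n-2} v_{n-i} f_{i+1} with f_2 = 2v_2, f_3 = 3v_3. -/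
/-!
With `F = ∑ f_N x^N` and `V = ∑_{k ≥ 2} v_k x^k`, the recurrence says `(1 + V) F = x V'`, so
`f_N = N [x^N] log (1 + V)`; expanding the logarithm gives the partition sum, with the coefficient
`c(σ) = (-1)^(B-1) (B-1)! / ∏ b_j!` (`B` the number of parts of `σ`) of `v_σ` in `log (1 + V)`.

We check this directly by strong induction on `N`: substituting the expansion of `f_{N-k}` into the
recurrence and regrouping by the partition `σ` obtained by adding the part `k` reduces the claim to
`∑_k (N - k) c(σ - k) = -N c(σ)` (sum over the distinct parts `k` of `σ`), which follows from
`c(σ - k) = -b_k c(σ) / (B - 1)` and `∑_k b_k (N - k) = (B - 1) N`.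
-/

open Finset

namespace LogCoeffExpansion

variable {K : Type*} [Field K] [CharZero K]

section Partitions

def partitionsGeTwo (N : ℕ) : Finset (Multiset ℕ) :=
  ((univ : Finset (Nat.Partition N)).image Nat.Partition.parts).filter fun m => ∀ j ∈ m, 2 ≤ j

theorem mem_partitionsGeTwo {N : ℕ} {m : Multiset ℕ} :
    m ∈ partitionsGeTwo N ↔ m.sum = N ∧ ∀ j ∈ m, 2 ≤ j := by
  simp only [partitionsGeTwo, mem_filter, mem_image, mem_univ, true_and]
  constructor
  · rintro ⟨⟨p, rfl⟩, h⟩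
    exact ⟨p.parts_sum, h⟩
  · rintro ⟨hsum, h⟩
    exact ⟨⟨⟨m, fun hi => (h _ hi).trans_lt' two_pos, hsum⟩, rfl⟩, h⟩

theorem singleton_mem_partitionsGeTwo {N : ℕ} (hN : 2 ≤ N) :
    ({N} : Multiset ℕ) ∈ partitionsGeTwo N :=
  mem_partitionsGeTwo.2
    ⟨Multiset.sum_singleton N, fun _ hj => Multiset.mem_singleton.1 hj ▸ hN⟩

theorem one_lt_card_of_ne_singleton {N : ℕ} {m : Multiset ℕ} (hsum : m.sum = N) (hN : N ≠ 0)
    (hne : m ≠ {N}) : 1 < Multiset.card m := by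
  by_contra! hcard
  interval_cases h : Multiset.card m
  · exact hN (by rw [← hsum, Multiset.card_eq_zero.1 h, Multiset.sum_zero])
  · obtain ⟨a, rfl⟩ := Multiset.card_eq_one.1 h
    exact hne (by rw [← hsum, Multiset.sum_singleton])

theorem add_two_le_of_mem {N k : ℕ} {m : Multiset ℕ} (hsum : m.sum = N)
    (h2 : ∀ j ∈ m, 2 ≤ j) (hne : m ≠ {N}) (hk : k ∈ m) : k + 2 ≤ N := by
  have hsplit : m.sum = k + (m.erase k).sum := by rw [← Multiset.sum_cons, Multiset.cons_erase hk]
  obtain ⟨x, hx⟩ : ∃ x, x ∈ m.erase k := by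
    refine Multiset.exists_mem_of_ne_zero fun h0 => hne ?_
    rw [← Multiset.cons_erase hk, h0] at hsum ⊢
    simp_all
  have := h2 x (Multiset.mem_of_mem_erase hx)
  have := Multiset.le_sum_of_mem hx
  omega

theorem sum_Icc_sum_partitionsGeTwo_sub {M : Type*} [AddCommMonoid M] (N : ℕ)
    (g : ℕ → Multiset ℕ → M) :
    ∑ k ∈ Icc 2 (N - 2), ∑ m ∈ partitionsGeTwo (N - k), g k m =
      ∑ m ∈ (partitionsGeTwo N).erase {N}, ∑ k ∈ m.toFinset, g k (m.erase k) := by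
  rw [sum_sigma', sum_sigma']
  refine sum_bij' (fun x _ => ⟨x.1 ::ₘ x.2, x.1⟩) (fun y _ => ⟨y.2, y.1.erase y.2⟩)
    ?_ ?_ ?_ ?_ ?_
  · rintro ⟨k, m⟩ hx
    simp only [mem_sigma, mem_Icc, mem_partitionsGeTwo] at hx
    obtain ⟨hk, hsum, h2⟩ := hx
    simp only [mem_sigma, mem_erase, mem_partitionsGeTwo, Multiset.mem_toFinset,
      Multiset.mem_cons_self, and_true, Multiset.sum_cons, Multiset.forall_mem_cons]
    refine ⟨fun h => ?_, by omega, by omega, h2⟩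
    rw [eq_comm, Multiset.singleton_eq_cons_iff] at h
    rw [h.2, Multiset.sum_zero] at hsum
    omega
  · rintro ⟨m, k⟩ hy
    simp only [mem_sigma, mem_erase, mem_partitionsGeTwo, Multiset.mem_toFinset] at hy
    obtain ⟨⟨hne, hsum, h2⟩, hk⟩ := hy
    have := add_two_le_of_mem hsum h2 hne hk
    have := h2 k hk
    have hsplit : m.sum = k + (m.erase k).sum := by
      rw [← Multiset.sum_cons, Multiset.cons_erase hk]
    simp only [mem_sigma, mem_Icc, mem_partitionsGeTwo]
    exact ⟨⟨by omega, by omega⟩, by omega, fun j hj => h2 j (Multiset.mem_of_mem_erase hj)⟩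
  · rintro ⟨k, m⟩ _
    simp
  · rintro ⟨m, k⟩ hy
    simp only [mem_sigma, Multiset.mem_toFinset] at hy
    simp [Multiset.cons_erase hy.2]
  · rintro ⟨k, m⟩ _
    simp

end Partitions

section Coefficients

variable {α : Type*} [DecidableEq α]

def countFactorialProd (m : Multiset α) : ℕ :=
  ∏ a ∈ m.toFinset, (m.count a).factorial

theorem countFactorialProd_pos (m : Multiset α) : 0 < countFactorialProd m :=
  prod_pos fun _ _ => Nat.factorial_pos _

@[simp]
theorem countFactorialProd_singleton (a : α) : countFactorialProd {a} = 1 := by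
  simp [countFactorialProd]

theorem countFactorialProd_erase {m : Multiset α} {k : α} (hk : k ∈ m) :
    countFactorialProd m = m.count k * countFactorialProd (m.erase k) := by
  have hk' : k ∈ m.toFinset := Multiset.mem_toFinset.2 hk
  have hsub : (m.erase k).toFinset ⊆ m.toFinset := fun x hx =>
    Multiset.mem_toFinset.2 (Multiset.mem_of_mem_erase (Multiset.mem_toFinset.1 hx))
  have herase :
      countFactorialProd (m.erase k) = ∏ a ∈ m.toFinset, ((m.erase k).count a).factorial :=
    prod_subset hsub fun a _ ha => by
      rw [Multiset.count_eq_zero_of_notMem (by simpa using ha), Nat.factorial_zero]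
  rw [herase, countFactorialProd, ← mul_prod_erase _ _ hk', ← mul_prod_erase _ _ hk',
    Multiset.count_erase_self, ← mul_assoc, Nat.mul_factorial_pred (Multiset.count_pos.2 hk).ne']
  congr 1
  exact prod_congr rfl fun a ha => by rw [Multiset.count_erase_of_ne (ne_of_mem_erase ha)]

def logCoeff (m : Multiset ℕ) : K :=
  (-1) ^ (Multiset.card m - 1) * (Multiset.card m - 1).factorial / countFactorialProd m

@[simp]
theorem logCoeff_singleton (a : ℕ) : (logCoeff {a} : K) = 1 := by
  simp [logCoeff]

theorem logCoeff_erase {m : Multiset ℕ} {d k : ℕ} (hd : Multiset.card m = d + 2)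
    (hk : k ∈ m) :
    (logCoeff (m.erase k) : K) = (-1) ^ d * d.factorial / countFactorialProd m * m.count k := by
  have hcount : (m.count k : K) ≠ 0 := Nat.cast_ne_zero.2 (Multiset.count_pos.2 hk).ne'
  have hprod : (countFactorialProd (m.erase k) : K) ≠ 0 :=
    Nat.cast_ne_zero.2 (countFactorialProd_pos _).ne'
  rw [logCoeff, Multiset.card_erase_of_mem hk, hd, countFactorialProd_erase hk]
  push_cast
  field_simp
  simp

theorem sum_count_mul_sub (m : Multiset ℕ) :
    ∑ k ∈ m.toFinset, (m.count k : K) * ((m.sum - k : ℕ) : K) =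
      (Multiset.card m - 1) * m.sum := by
  have hcard : ∑ k ∈ m.toFinset, (m.count k : K) = Multiset.card m := by
    exact_mod_cast Multiset.toFinset_sum_count_eq m
  have hsum : ∑ k ∈ m.toFinset, (m.count k : K) * k = m.sum := by
    exact_mod_cast (Finset.sum_multiset_count m).symm
  have hcast : ∀ k ∈ m.toFinset, ((m.sum - k : ℕ) : K) = m.sum - k := fun k hk =>
    Nat.cast_sub (Multiset.le_sum_of_mem (Multiset.mem_toFinset.1 hk))
  simp_rw [sum_congr rfl fun k hk => congrArg _ (hcast k hk), mul_sub, sum_sub_distrib,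
    ← sum_mul, hcard, hsum]
  ring

theorem sum_sub_mul_logCoeff_erase {m : Multiset ℕ} (hm : 1 < Multiset.card m) :
    ∑ k ∈ m.toFinset, ((m.sum - k : ℕ) : K) * logCoeff (m.erase k) =
      -(m.sum * logCoeff m) := by
  obtain ⟨d, hd⟩ : ∃ d, Multiset.card m = d + 2 := ⟨Multiset.card m - 2, by omega⟩
  calc ∑ k ∈ m.toFinset, ((m.sum - k : ℕ) : K) * logCoeff (m.erase k)
      = (-1) ^ d * d.factorial / countFactorialProd m *
          ∑ k ∈ m.toFinset, (m.count k : K) * ((m.sum - k : ℕ) : K) := by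
        rw [mul_sum]
        exact sum_congr rfl fun k hk => by
          rw [logCoeff_erase hd (Multiset.mem_toFinset.1 hk)]
          ring
    _ = -(m.sum * logCoeff m) := by
        rw [sum_count_mul_sub, logCoeff, hd, show d + 2 - 1 = d + 1 by omega, Nat.factorial_succ]
        push_cast
        ring

theorem sum_mul_logCoeff_erase_mul_prod {m : Multiset ℕ} (hm : 1 < Multiset.card m)
    (w : ℕ → K) :
    ∑ k ∈ m.toFinset,
        w k * (((m.sum - k : ℕ) : K) * logCoeff (m.erase k) * ((m.erase k).map w).prod) =
      -(m.sum * logCoeff m * (m.map w).prod) := by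
  have hterm : ∀ k ∈ m.toFinset,
      w k * (((m.sum - k : ℕ) : K) * logCoeff (m.erase k) * ((m.erase k).map w).prod) =
        ((m.sum - k : ℕ) : K) * logCoeff (m.erase k) * (m.map w).prod := fun k hk => by
    rw [← Multiset.prod_map_erase (Multiset.mem_toFinset.1 hk)]
    ring
  rw [sum_congr rfl hterm, ← sum_mul, sum_sub_mul_logCoeff_erase hm, neg_mul]

end Coefficients

theorem eq_sum_partitionsGeTwo (w f : ℕ → K)
    (hrec : ∀ N ≥ 2, f N = N * w N - ∑ k ∈ Icc 2 (N - 2), w k * f (N - k)) :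
    ∀ N ≥ 2, f N = ∑ m ∈ partitionsGeTwo N, N * logCoeff m * (m.map w).prod := by
  intro N hN
  induction N using Nat.strong_induction_on with
  | _ N ih =>
    calc f N = N * w N - ∑ k ∈ Icc 2 (N - 2), w k * f (N - k) := hrec N hN
      _ = N * w N - ∑ k ∈ Icc 2 (N - 2), ∑ m ∈ partitionsGeTwo (N - k),
            w k * (((N - k : ℕ) : K) * logCoeff m * (m.map w).prod) := by
          congr 1
          refine sum_congr rfl fun k hk => ?_
          rw [mem_Icc] at hk
          rw [ih (N - k) (by omega) (by omega), mul_sum]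
      _ = N * w N - ∑ m ∈ (partitionsGeTwo N).erase {N}, ∑ k ∈ m.toFinset,
            w k * (((N - k : ℕ) : K) * logCoeff (m.erase k) * ((m.erase k).map w).prod) := by
          rw [sum_Icc_sum_partitionsGeTwo_sub]
      _ = N * w N + ∑ m ∈ (partitionsGeTwo N).erase {N}, N * logCoeff m * (m.map w).prod := by
          rw [sub_eq_add_neg, ← sum_neg_distrib]
          refine congrArg (_ + ·) (sum_congr rfl fun m hm => ?_)
          obtain ⟨hne, hsum, -⟩ := (mem_erase.trans (and_congr_right' mem_partitionsGeTwo)).1 hm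
          rw [← hsum, sum_mul_logCoeff_erase_mul_prod
            (one_lt_card_of_ne_singleton hsum (by omega) hne), neg_neg]
      _ = ∑ m ∈ partitionsGeTwo N, N * logCoeff m * (m.map w).prod := by
          rw [← add_sum_erase _ (fun m => (N : K) * logCoeff m * (m.map w).prod)
            (singleton_mem_partitionsGeTwo hN)]
          simp

theorem sum_Icc_reflect {M : Type*} [AddCommMonoid M] (n : ℕ) (g : ℕ → ℕ → M) :
    ∑ i ∈ Icc 1 (n - 2), g (n - i) (i + 1) = ∑ k ∈ Icc 2 (n + 1 - 2), g k (n + 1 - k) := by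
  refine sum_nbij' (fun i => n - i) (fun k => n - k) ?_ ?_ ?_ ?_ ?_ <;>
    (intro i hi; simp only [mem_Icc] at hi)
  · simp only [mem_Icc]; omega
  · simp only [mem_Icc]; omega
  · omega
  · omega
  · congr 1
    omega

section Multiplicities

def ofCounts {n : ℕ} (b : Fin n → ℕ) : Multiset ℕ :=
  ∑ j, Multiset.replicate (b j) (j : ℕ)

theorem count_ofCounts {n : ℕ} (b : Fin n → ℕ) (j : Fin n) :
    (ofCounts b).count (j : ℕ) = b j := by
  rw [ofCounts, Multiset.count_sum', sum_eq_single j]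
  · simp
  · intro i _ hij
    rw [Multiset.count_replicate, if_neg (Fin.val_injective.ne hij)]
  · simp

theorem lt_of_mem_ofCounts {n a : ℕ} {b : Fin n → ℕ} (ha : a ∈ ofCounts b) : a < n := by
  obtain ⟨j, -, hj⟩ := Multiset.mem_sum.1 ha
  rw [Multiset.eq_of_mem_replicate hj]
  exact j.2

theorem sum_ofCounts {n : ℕ} (b : Fin n → ℕ) :
    (ofCounts b).sum = ∑ j : Fin n, (j : ℕ) * b j := by
  simp [ofCounts, Multiset.sum_sum, mul_comm]

theorem ofCounts_count {n : ℕ} {m : Multiset ℕ} (hm : ∀ a ∈ m, a < n) :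
    ofCounts (fun j : Fin n => m.count (j : ℕ)) = m := by
  ext a
  by_cases ha : a < n
  · exact count_ofCounts _ ⟨a, ha⟩
  · rw [Multiset.count_eq_zero_of_notMem fun h => ha (lt_of_mem_ofCounts h),
      Multiset.count_eq_zero_of_notMem fun h => ha (hm a h)]

@[to_additive]
theorem prod_count_eq_prod_toFinset {M : Type*} [CommMonoid M] {n : ℕ} {s : Finset (Fin n)}
    {m : Multiset ℕ} (hm : m.toFinset ⊆ s.map Fin.valEmbedding) (g : ℕ → ℕ → M)
    (hg : ∀ a, g a 0 = 1) :
    ∏ j ∈ s, g j (m.count (j : ℕ)) = ∏ a ∈ m.toFinset, g a (m.count a) := by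
  refine (prod_map s Fin.valEmbedding fun a => g a (m.count a)).symm.trans ?_
  exact (prod_subset hm fun a _ ha => by
    rw [Multiset.count_eq_zero_of_notMem (by simpa using ha), hg]).symm

theorem prod_pow_count_eq_prod_map {M : Type*} [CommMonoid M] {n : ℕ} {m : Multiset ℕ}
    (hm : ∀ a ∈ m, a < n) (w : ℕ → M) :
    ∏ j : Fin n, w j ^ m.count (j : ℕ) = (m.map w).prod := by
  rw [prod_multiset_map_count]
  refine prod_count_eq_prod_toFinset (fun a ha => ?_) (fun a c => w a ^ c) fun _ => pow_zero _
  simpa using hm a (Multiset.mem_toFinset.1 ha)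

def multiplicityVectors (n : ℕ) : Finset (Fin (n + 2) → ℕ) :=
  (Fintype.piFinset fun _ : Fin (n + 2) => Finset.range (n + 2)).filter
    fun b : Fin (n + 2) → ℕ =>
      (∑ j : Fin (n + 2), (j : ℕ) * b j = n + 1) ∧
        ∀ j : Fin (n + 2), (j : ℕ) < 2 → b j = 0

theorem sum_multiplicityVectors {M : Type*} [AddCommMonoid M] (n : ℕ)
    (g : (Fin (n + 2) → ℕ) → M) :
    ∑ b ∈ multiplicityVectors n, g b =
      ∑ m ∈ partitionsGeTwo (n + 1), g fun j => m.count (j : ℕ) := by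
  symm
  refine sum_nbij' (fun m (j : Fin (n + 2)) => m.count (j : ℕ)) ofCounts ?_ ?_ ?_ ?_
    fun _ _ => rfl
  · intro m hm
    obtain ⟨hsum, h2⟩ := mem_partitionsGeTwo.1 hm
    have hlt : ∀ a ∈ m, a < n + 2 := fun a ha => by
      have := Multiset.le_sum_of_mem ha
      omega
    have hcard : 2 * Multiset.card m ≤ m.sum := by
      simpa [mul_comm] using Multiset.card_nsmul_le_sum h2
    simp only [multiplicityVectors, mem_filter, Fintype.mem_piFinset, mem_range]
    refine ⟨fun j => (Multiset.count_le_card _ m).trans_lt (by omega), ?_, fun j hj => ?_⟩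
    · rw [← sum_ofCounts, ofCounts_count hlt, hsum]
    · exact Multiset.count_eq_zero_of_notMem fun h => by have := h2 _ h; omega
  · intro b hb
    simp only [multiplicityVectors, mem_filter] at hb
    refine mem_partitionsGeTwo.2 ⟨(sum_ofCounts b).trans hb.2.1, fun a ha => ?_⟩
    have hcount : (ofCounts b).count a = b ⟨a, lt_of_mem_ofCounts ha⟩ :=
      count_ofCounts b ⟨a, _⟩
    by_contra! h
    have hpos := Multiset.count_pos.2 ha
    rw [hcount, hb.2.2 _ h] at hpos
    exact hpos.false
  · intro m hm
    obtain ⟨hsum, -⟩ := mem_partitionsGeTwo.1 hm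
    exact ofCounts_count fun a ha => by
      have := Multiset.le_sum_of_mem ha
      omega
  · intro b _
    funext j
    exact count_ofCounts b j

/-- The paper's `t_σ / (n + 1)`, for `σ` given by its multiplicity vector. -/
noncomputable def tCoeff (n : ℕ) (b : Fin (n + 2) → ℕ) : ℝ :=
  (if b (Fin.last (n + 1)) = 1 then (1 : ℝ) else 0) +
    (if (∑ j ∈ Finset.univ.filter (fun j : Fin (n + 2) => (j : ℕ) ≤ n - 1), b j) = 0
      then (0 : ℝ)
      else (-1 : ℝ) ^
          ((∑ j ∈ Finset.univ.filter (fun j : Fin (n + 2) => (j : ℕ) ≤ n - 1), b j) - 1) *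
        ((∑ j ∈ Finset.univ.filter (fun j : Fin (n + 2) => (j : ℕ) ≤ n - 1), b j) - 1).factorial /
        (∏ j ∈ Finset.univ.filter (fun j : Fin (n + 2) => (j : ℕ) ≤ n - 1),
          (b j).factorial : ℕ))

theorem tCoeff_count {n : ℕ} {m : Multiset ℕ} (hm : m ∈ partitionsGeTwo (n + 1)) :
    tCoeff n (fun j => m.count (j : ℕ)) = logCoeff m := by
  obtain ⟨hsum, h2⟩ := mem_partitionsGeTwo.1 hm
  by_cases hne : m = {n + 1}
  · subst hne
    have hB : ∑ j ∈ univ.filter (fun j : Fin (n + 2) => (j : ℕ) ≤ n - 1),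
        ({n + 1} : Multiset ℕ).count (j : ℕ) = 0 :=
      sum_eq_zero fun j hj => Multiset.count_eq_zero_of_notMem fun h => by
        simp only [mem_filter, Multiset.mem_singleton] at hj h
        omega
    simp [tCoeff, hB]
  have hle : ∀ a ∈ m, a ≤ n - 1 := fun a ha => by
    have := add_two_le_of_mem hsum h2 hne ha
    omega
  have hsub : m.toFinset ⊆ (univ.filter fun j : Fin (n + 2) => (j : ℕ) ≤ n - 1).map
      Fin.valEmbedding := fun a ha => by
    have := hle a (Multiset.mem_toFinset.1 ha)
    simp only [mem_map, mem_filter, mem_univ, true_and, Fin.valEmbedding_apply]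
    exact ⟨⟨a, by omega⟩, this, rfl⟩
  have hB : ∑ j ∈ univ.filter (fun j : Fin (n + 2) => (j : ℕ) ≤ n - 1), m.count (j : ℕ) =
      Multiset.card m :=
    (sum_count_eq_sum_toFinset hsub (fun _ c => c) fun _ => rfl).trans
      (Multiset.toFinset_sum_count_eq m)
  have hD : ∏ j ∈ univ.filter (fun j : Fin (n + 2) => (j : ℕ) ≤ n - 1),
      (m.count (j : ℕ)).factorial = countFactorialProd m :=
    prod_count_eq_prod_toFinset hsub (fun _ c => c.factorial) fun _ => rfl
  have htop : m.count (n + 1) = 0 :=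
    Multiset.count_eq_zero_of_notMem fun h => by
      have := hle _ h
      omega
  have hcard := one_lt_card_of_ne_singleton hsum (by omega) hne
  simp only [tCoeff, Fin.val_last, htop, hB, hD, if_neg (show Multiset.card m ≠ 0 by omega),
    logCoeff]
  norm_num

end Multiplicities

end LogCoeffExpansion

open LogCoeffExpansion

theorem stmt19_general (v : ℕ → ℤ) (f : ℕ → ℝ)
    (hrec : ∀ n ≥ 1, f (n + 1) = (n + 1) * (v (n + 1) : ℝ) -
      ∑ i ∈ Finset.Icc 1 (n - 2), (v (n - i) : ℝ) * f (i + 1)) :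
    ∀ n ≥ 3, f (n + 1) =
      ∑ b ∈ (Fintype.piFinset fun _ : Fin (n + 2) => Finset.range (n + 2)).filter
          (fun b : Fin (n + 2) → ℕ =>
            (∑ j : Fin (n + 2), (j : ℕ) * b j = n + 1) ∧
            ∀ j : Fin (n + 2), (j : ℕ) < 2 → b j = 0),
        ((if b (Fin.last (n + 1)) = 1 then (1 : ℝ) else 0) +
          (if (∑ j ∈ Finset.univ.filter (fun j : Fin (n + 2) => (j : ℕ) ≤ n - 1), b j) = 0
            then (0 : ℝ)
            else (-1 : ℝ) ^
                ((∑ j ∈ Finset.univ.filter (fun j : Fin (n + 2) => (j : ℕ) ≤ n - 1), b j) - 1) *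
              ((∑ j ∈ Finset.univ.filter (fun j : Fin (n + 2) => (j : ℕ) ≤ n - 1), b j) - 1).factorial /
              (∏ j ∈ Finset.univ.filter (fun j : Fin (n + 2) => (j : ℕ) ≤ n - 1),
                (b j).factorial : ℕ))) * ((n : ℝ) + 1) *
          ∏ j : Fin (n + 2), (v (j : ℕ) : ℝ) ^ b j := by
  intro n hn
  have hrec' : ∀ N ≥ 2, f N = N * (v N : ℝ) - ∑ k ∈ Icc 2 (N - 2), (v k : ℝ) * f (N - k) := by
    intro N hN
    obtain ⟨n, rfl⟩ : ∃ n, N = n + 1 := ⟨N - 1, by omega⟩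
    rw [hrec n (by omega), sum_Icc_reflect n fun a b => (v a : ℝ) * f b]
    push_cast
    rfl
  calc f (n + 1) = ∑ m ∈ partitionsGeTwo (n + 1),
        ((n + 1 : ℕ) : ℝ) * logCoeff m * (m.map fun j => (v j : ℝ)).prod :=
        eq_sum_partitionsGeTwo _ f hrec' (n + 1) (by omega)
    _ = ∑ m ∈ partitionsGeTwo (n + 1), tCoeff n (fun j => m.count (j : ℕ)) * ((n : ℝ) + 1) *
          ∏ j : Fin (n + 2), (v j : ℝ) ^ m.count (j : ℕ) := by
        refine sum_congr rfl fun m hm => ?_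
        have hlt : ∀ a ∈ m, a < n + 2 := fun a ha => by
          have := Multiset.le_sum_of_mem ha
          have := (mem_partitionsGeTwo.1 hm).1
          omega
        rw [tCoeff_count hm, prod_pow_count_eq_prod_map hlt fun j => (v j : ℝ)]
        push_cast
        ring
    _ = _ := (sum_multiplicityVectors n fun b =>
          tCoeff n b * ((n : ℝ) + 1) * ∏ j : Fin (n + 2), (v j : ℝ) ^ b j).symm

/-- For integers `v_n` and `f` defined by `f_2 = 2v_2`, `f_3 = 3v_3`,
`f_{n+1} = (n+1)v_{n+1} - ∑_{i=1}^{n-2} v_{n-i} f_{i+1}`, for each `n ≥ 3` we have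
`f_{n+1} = ∑_{σ} t_σ v_σ`, the sum being over partitions `σ = (b_2,…,b_{n+1})` of
`n+1` with parts `≥ 2` (`∑ j b_j = n+1`), where `v_σ = ∏ v_j^{b_j}` and
`t_σ = (δ_{b_{n+1},1} + (-1)^{B-1}(B-1)!/(b_2!⋯b_{n-1}!))(n+1)` with
`B = b_2 + ⋯ + b_{n-1}` (the second term read as `0` when `B = 0`). -/
theorem stmt19 (v : ℕ → ℤ) (f : ℕ → ℝ)
    (hf2 : f 2 = 2 * (v 2 : ℝ)) (hf3 : f 3 = 3 * (v 3 : ℝ))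
    (hrec : ∀ n ≥ 1, f (n + 1) = (n + 1) * (v (n + 1) : ℝ) -
      ∑ i ∈ Finset.Icc 1 (n - 2), (v (n - i) : ℝ) * f (i + 1)) :
    ∀ n ≥ 3, f (n + 1) =
      ∑ b ∈ (Fintype.piFinset fun _ : Fin (n + 2) => Finset.range (n + 2)).filter
          (fun b : Fin (n + 2) → ℕ =>
            (∑ j : Fin (n + 2), (j : ℕ) * b j = n + 1) ∧
            ∀ j : Fin (n + 2), (j : ℕ) < 2 → b j = 0),
        ((if b (Fin.last (n + 1)) = 1 then (1 : ℝ) else 0) +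
          (if (∑ j ∈ Finset.univ.filter (fun j : Fin (n + 2) => (j : ℕ) ≤ n - 1), b j) = 0
            then (0 : ℝ)
            else (-1 : ℝ) ^
                ((∑ j ∈ Finset.univ.filter (fun j : Fin (n + 2) => (j : ℕ) ≤ n - 1), b j) - 1) *
              ((∑ j ∈ Finset.univ.filter (fun j : Fin (n + 2) => (j : ℕ) ≤ n - 1), b j) - 1).factorial /
              (∏ j ∈ Finset.univ.filter (fun j : Fin (n + 2) => (j : ℕ) ≤ n - 1),
                (b j).factorial : ℕ))) * ((n : ℝ) + 1) *
          ∏ j : Fin (n + 2), (v (j : ℕ) : ℝ) ^ b j :=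
  stmt19_general v f hrec
end
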